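/- The Fourier matrix F = (1/√2)·[[1,1],[1,−1]] over ℍ equals the reflection r_{(−1, 1+√2), −1} and is an element of order 2. -/
import Mathlib


noncomputable section
open Quaternion Matrix

abbrev HQ := ℍ[ℝ]
def qi : HQ := ⟨0,1,0,0⟩
def qj : HQ := ⟨0,0,1,0⟩
def qk : HQ := ⟨0,0,0,1⟩

/-- Inner product on the right ℍ-module ℍ^d. -/
def inprod {d : ℕ} (v w : Fin d → HQ) : HQ := ∑ m, star (v m) * w m


/-- The reflection r_{a,ξ} = I − a(1−ξ)a*/⟨a,a⟩ as a matrix. -/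
def reflM {d : ℕ} (a : Fin d → HQ) (ξ : HQ) : Matrix (Fin d) (Fin d) HQ :=
  1 - Matrix.of (fun m n => a m * (1 - ξ) * star (a n) * (inprod a a)⁻¹)

/-- The Fourier matrix F = (1/√2)[[1,1],[1,−1]]. -/
def Fmat : Matrix (Fin 2) (Fin 2) HQ :=
  (((Real.sqrt 2)⁻¹ : ℝ) : HQ) • !![1, 1; 1, -1]

/-- F equals the reflection r_{(−1,1+√2),−1} and has order 2. -/
theorem Fourier_is_reflection_of_order_two :
    Fmat = reflM ![-1, ((1 + Real.sqrt 2 : ℝ) : HQ)] (-1) ∧ orderOf Fmat = 2 := by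
  have h2 : Real.sqrt 2 * Real.sqrt 2 = 2 := Real.mul_self_sqrt (by norm_num)
  have hpos : (0:ℝ) < Real.sqrt 2 := Real.sqrt_pos.2 (by norm_num)
  have h4 : (4 + 2*Real.sqrt 2) ≠ 0 := by positivity
  have c1 : (1:HQ) = ((1:ℝ):HQ) := rfl
  have c2 : (2:HQ) = ((2:ℝ):HQ) := rfl
  have c4 : (4:HQ) = ((4:ℝ):HQ) := rfl
  constructor
  · have hinv : (inprod ![-1, ((1 + Real.sqrt 2 : ℝ) : HQ)] ![-1, ((1 + Real.sqrt 2 : ℝ) : HQ)])⁻¹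
        = (((4 + 2*Real.sqrt 2)⁻¹ : ℝ) : HQ) := by
      have : inprod ![-1, ((1 + Real.sqrt 2 : ℝ) : HQ)] ![-1, ((1 + Real.sqrt 2 : ℝ) : HQ)]
          = ((4 + 2*Real.sqrt 2 : ℝ) : HQ) := by
        simp only [inprod, Fin.sum_univ_two, Matrix.cons_val_zero, Matrix.cons_val_one,
          Matrix.head_cons, star_neg, star_one, Quaternion.star_coe, ← Quaternion.coe_mul]
        norm_num
        rw [c1]
        simp only [← Quaternion.coe_mul, ← Quaternion.coe_add, Quaternion.coe_inj]
        linear_combination h2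
      rw [this, ← Quaternion.coe_inv]
    apply Matrix.ext; intro i j
    fin_cases i <;> fin_cases j <;>
      simp only [Fmat, reflM, Matrix.smul_apply, Matrix.sub_apply, Matrix.one_apply,
        Matrix.of_apply, Matrix.cons_val', Matrix.cons_val_zero, Matrix.cons_val_one,
        Matrix.head_cons, Matrix.head_fin_const, Matrix.empty_val', Matrix.cons_val_fin_one,
        Fin.mk_zero, Fin.mk_one, hinv] <;>
      norm_num [Quaternion.star_coe]
    all_goals
      rw [c1] <;> try rw [c2]
      simp only [← Quaternion.coe_inv, ← Quaternion.coe_mul, ← Quaternion.coe_sub,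
        ← Quaternion.coe_neg, ← Quaternion.coe_add, Quaternion.coe_inj]
      field_simp
      nlinarith [h2, hpos]
  · have hsq : Fmat ^ 2 = 1 := by
      rw [pow_two]
      apply Matrix.ext; intro i j
      fin_cases i <;> fin_cases j <;>
        simp only [Fmat, Matrix.mul_apply, Fin.sum_univ_two, Matrix.smul_apply,
          Matrix.one_apply, Matrix.cons_val', Matrix.cons_val_zero, Matrix.cons_val_one,
          Matrix.head_cons, Matrix.head_fin_const, Matrix.empty_val', Matrix.cons_val_fin_one,
          Fin.mk_zero, Fin.mk_one, smul_eq_mul] <;>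
        norm_num <;>
        · rw [c1]
          simp only [← Quaternion.coe_inv, ← Quaternion.coe_mul, ← Quaternion.coe_add,
            Quaternion.coe_inj]
          rw [← mul_inv, h2]
          norm_num
    have hne : Fmat ≠ 1 := by
      intro h
      have h01 : Fmat 0 1 = (1 : Matrix (Fin 2) (Fin 2) HQ) 0 1 := by rw [h]
      simp only [Fmat, Matrix.smul_apply, Matrix.one_apply, Matrix.cons_val', Matrix.cons_val_zero,
        Matrix.cons_val_one, Matrix.head_cons, Matrix.head_fin_const, Matrix.empty_val',
        Matrix.cons_val_fin_one, smul_eq_mul, mul_one] at h01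
      norm_num at h01
      rw [← Quaternion.coe_zero, Quaternion.coe_inj] at h01
      exact absurd h01 hpos.ne'
    exact orderOf_eq_prime hsq hne
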